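/- For the return word substitution ρ̄(k) = k₁ ⋯ k_{r-1} f(k) on the alphabet 𝒩 ∪ {∞}, where f(k) = k_r + p·k, and the return word expansion τ(k) = b a^k, the conjugation relation τ ∘ ρ̄ = ρ ∘ τ holds: τ(ρ̄(k)) = ρ(τ(k)) for every letter k. -/
import Mathlib


/-- The two-letter alphabet {a, b}. -/
inductive AB | a | b
deriving DecidableEq

/-- The return word expansion τ(k) = b a^k. -/
def tau (k : ℕ) : List AB := AB.b :: List.replicate k AB.a

/-- τ extended to finite sequences over ℕ₀ by concatenation. -/
def tauW (x : List ℕ) : List AB := x.flatMap tau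

/-- The conjugation relation τ ∘ ρ̄ = ρ ∘ τ on letters. -/
theorem stmt4 (p : ℕ) (ks : List ℕ) (kr : ℕ)
    (f : ℕ → ℕ) (hf : ∀ k, f k = kr + p * k)
    (ρ : AB → List AB)
    (hρa : ρ AB.a = List.replicate p AB.a)
    (hρb : ρ AB.b = tauW (ks ++ [kr]))
    (ρbar : ℕ → List ℕ) (hρbar : ∀ k, ρbar k = ks ++ [f k]) :
    ∀ k : ℕ, tauW (ρbar k) = (tau k).flatMap ρ := by
  intro k
  have hrep : (List.replicate k AB.a).flatMap ρ = List.replicate (k * p) AB.a := by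
    induction k with
    | zero => simp
    | succ n ih =>
      simp [List.replicate_succ, List.flatMap_cons, ih, hρa, ← List.replicate_add,
        Nat.succ_mul, Nat.add_comm]
  simp [hρbar, hf, tauW, tau, hρb, hρa, hrep, List.flatMap_append, ← List.replicate_add,
    Nat.mul_comm, List.append_assoc]
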